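/- arXiv:2302.04300 — 2 statements merged into one kernel-verified Lean document; each statement's English description precedes it below -/
import Mathlib

section
/- Let G be a finite group whose order q is a perfect square (q = s² for some positive integer s) and let f : G → G be two-to-one. Then pres(f) ≤ 2s − 2, i.e. pres(f) ≤ 2√q − 2. -/
/-- The number of distinct values of `f`, i.e. `V(f) = #Im(f)`. -/
def imCard {G : Type*} [Fintype G] [DecidableEq G] (f : G → G) : ℕ :=
  (Finset.univ.image f).card

/-- The set of preimages of `b` under `f`. -/
def preim {G : Type*} [Fintype G] [DecidableEq G] (f : G → G) (b : G) : Finset G :=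
  Finset.univ.filter (fun x => f x = b)

/-- Permutation resemblance: `pres(f) = min{V(g) : g + f is a permutation of G}`. -/
noncomputable def pres {G : Type*} [AddGroup G] [Fintype G] [DecidableEq G] (f : G → G) : ℕ :=
  sInf {n | ∃ g : G → G, Function.Bijective (fun x => g x + f x) ∧ imCard g = n}

/-!
Let `N = f(G)`, so `#N = q / 2`. Put `g = 0` on one point of each fibre of `f`; then `g + f`
covers `N`, and it remains to send the other point `x` of each fibre to `G \ N` injectively
as `d (f x) + f x`, for a map `d` taking few values. The shifts are chosen greedily: if `r`
points of `N` and `r` targets are left, and the `z` shifts used so far hit no target, then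
averaging over the remaining `q - z` shifts gives one that matches at least `r² / (q - z)`
points. Starting from `r = q / 2`, `z = 1` (the shift `0`), the bound `r (z + 1) + z ≤ q + 1`
is preserved, so after `s - 2` shifts at most `s - 1` points remain, which are matched with
one shift each. Together with the value `0` this makes `2 s - 2` values.
-/

open Finset

theorem greedy_step_le {K : Type*} [Field K] [LinearOrder K] [IsStrictOrderedRing K]
    {q z r b : K} (hz : 1 ≤ z) (hzq : z < q) (hz2 : (z + 1) ^ 2 ≤ q + 3)
    (hr : r * (z + 1) + z ≤ q + 1) (hb : r ^ 2 ≤ b * (q - z)) :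
    (r - b) * (z + 2) + (z + 1) ≤ q + 1 := by
  have hM : 0 < q - z := sub_pos.2 hzq
  have key : r * (q - z - r) * (z + 2) ≤ (q - z) ^ 2 := by
    rcases le_total z 2 with hz2' | hz2'
    · nlinarith [mul_nonneg (by linarith : (0 : K) ≤ z + 2) (sq_nonneg (q - z - 2 * r)),
        mul_nonneg (sub_nonneg.2 hz2') (sq_nonneg (q - z))]
    · -- now `r ≤ (q - z) / 2`, where `r ↦ r (q - z - r)` is increasing, so the endpoint
      -- `r (z + 1) = q + 1 - z` is the worst case
      have hF : r * (q - z - r) * (z + 2) * (z + 1) ^ 2 ≤ (q - z) ^ 2 * (z + 1) ^ 2 := by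
        nlinarith [mul_nonneg (by linarith : (0 : K) ≤ q + 1 - z - r * (z + 1))
          (by nlinarith : (0 : K) ≤ (q - z) * z - r * (z + 1) - 1)]
      exact le_of_mul_le_mul_right hF (by positivity)
  have : (q - z) * ((r - b) * (z + 2)) ≤ (q - z) * (q - z) := by nlinarith
  linarith [le_of_mul_le_mul_left this hM]

/-- `GreedyWins q z r c`: in a group of order `q`, when `r` points are still to be matched
with `r` targets and `z` shifts are known to hit no target, `c` more shifts suffice. Either
each point gets a shift of its own, or every shift matching the `b ≥ r² / (q - z)` points that
averaging guarantees leads to a winning position. -/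
inductive GreedyWins (q : ℕ) : ℕ → ℕ → ℕ → Prop
  | of_le {z r c : ℕ} : r ≤ c → GreedyWins q z r c
  | step {z r c : ℕ} : 0 < r →
      (∀ b, r ^ 2 ≤ b * (q - z) → b ≤ r → GreedyWins q (z + 1) (r - b) c) →
      GreedyWins q z r (c + 1)

theorem greedyWins_sq_of_mul_add_le {s : ℕ} (hs : 3 ≤ s) (c : ℕ) (hc : s - 1 ≤ c) :
    ∀ z r, 1 ≤ z → z + c = 2 * s - 2 → r * (z + 1) + z ≤ s ^ 2 + 1 →
      GreedyWins (s ^ 2) z r c := by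
  induction c, hc using Nat.le_induction with
  | base =>
    intro z r _ hz hr
    have hzs : z + 1 = s := by omega
    refine .of_le (Nat.le_sub_one_of_lt (lt_of_not_ge fun hsr => ?_))
    rw [hzs] at hr
    nlinarith
  | succ c hc ih =>
    intro z r hz1 hz hr
    by_cases hrc : r ≤ c + 1
    · exact .of_le hrc
    refine .step (by omega) fun b hb hbr => ih (z + 1) (r - b) (by omega) (by omega) ?_
    have hzq : z < s ^ 2 := by nlinarith
    have hz2 : (z + 1) ^ 2 ≤ s ^ 2 + 3 := by
      have : z + 1 ≤ s := by omega
      nlinarith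
    have hstep := greedy_step_le (K := ℚ) (q := (s ^ 2 : ℕ)) (z := z) (r := r) (b := b)
      (by exact_mod_cast hz1) (by exact_mod_cast hzq) (by exact_mod_cast hz2)
      (by exact_mod_cast hr) (by rw [← Nat.cast_sub hzq.le]; exact_mod_cast hb)
    rw [← Nat.cast_sub hbr] at hstep
    exact_mod_cast hstep

theorem greedyWins_start {s r : ℕ} (hs : 2 ≤ s) (hr : 2 * r = s ^ 2) :
    GreedyWins (s ^ 2) 1 r (2 * s - 3) := by
  rcases hs.eq_or_lt with rfl | hs
  · -- `q = 4`: averaging over the three nonzero shifts already matches both points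
    obtain rfl : r = 2 := by omega
    refine .step two_pos fun b hb hbr => .of_le ?_
    omega
  · exact greedyWins_sq_of_mul_add_le hs _ (by omega) 1 r le_rfl (by omega) (by omega)

section ShiftMatching

variable {G : Type*} [AddGroup G] [DecidableEq G]

def HasShiftMatching (A U : Finset G) (c : ℕ) : Prop :=
  ∃ d : G → G, #(A.image d) ≤ c ∧ Set.MapsTo (fun a => d a + a) A U ∧
    Set.InjOn (fun a => d a + a) A

theorem hasShiftMatching_of_card_le {A U : Finset G} {c : ℕ} (hAU : #A ≤ #U) (hc : #A ≤ c) :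
    HasShiftMatching A U c := by
  obtain ⟨e, hmaps, hinj⟩ := A.finite_toSet.exists_injOn_of_encard_le (t := (U : Set G))
    (by simpa only [Set.encard_coe_eq_coe_finsetCard, Nat.cast_le] using hAU)
  exact ⟨fun a => e a - a, card_image_le.trans hc, fun a ha => by simpa using hmaps ha,
    fun a ha a' ha' h => hinj ha ha' (by simpa using h)⟩

theorem HasShiftMatching.of_residual {A U : Finset G} {c : ℕ} (d : G)
    (h : HasShiftMatching {a ∈ A | d + a ∉ U} (U \ A.image (d + ·)) c) :
    HasShiftMatching A U (c + 1) := by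
  obtain ⟨e, hcard, hmaps, hinj⟩ := h
  have hrest : ∀ a ∈ A, d + a ∉ U → e a + a ∈ U ∧ ∀ a' ∈ A, e a + a ≠ d + a' := by
    intro a ha hda
    have := hmaps (mem_filter.2 ⟨ha, hda⟩)
    simp only [coe_sdiff, coe_image, Set.mem_sdiff, mem_coe, Set.mem_image] at this
    exact ⟨this.1, fun a' ha' h => this.2 ⟨a', ha', h.symm⟩⟩
  refine ⟨fun a => if d + a ∈ U then d else e a, ?_, ?_, ?_⟩
  · calc #(A.image fun a => if d + a ∈ U then d else e a)
        ≤ #(insert d ({a ∈ A | d + a ∉ U}.image e)) := by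
          refine card_le_card fun y hy => ?_
          obtain ⟨a, ha, rfl⟩ := mem_image.1 hy
          split_ifs with hda
          · exact mem_insert_self _ _
          · exact mem_insert_of_mem (mem_image_of_mem e (mem_filter.2 ⟨ha, hda⟩))
      _ ≤ c + 1 := (card_insert_le _ _).trans (by omega)
  · intro a ha
    dsimp only
    split_ifs with hda
    · exact hda
    · exact (hrest a ha hda).1
  · intro a₁ ha₁ a₂ ha₂ heq
    dsimp only at heq
    split_ifs at heq with h₁ h₂ h₂
    · exact add_left_cancel heq
    · exact absurd heq.symm ((hrest a₂ ha₂ h₂).2 a₁ ha₁)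
    · exact absurd heq ((hrest a₁ ha₁ h₁).2 a₂ ha₂)
    · exact hinj (mem_filter.2 ⟨ha₁, h₁⟩) (mem_filter.2 ⟨ha₂, h₂⟩) heq

variable [Fintype G]

theorem sum_card_filter_add_mem (A U : Finset G) :
    ∑ d, #{a ∈ A | d + a ∈ U} = #A * #U := by
  have hcol : ∀ a, #{d | d + a ∈ U} = #U := fun a =>
    card_equiv (Equiv.addRight a) (by simp)
  calc ∑ d, #{a ∈ A | d + a ∈ U}
      = ∑ a ∈ A, #{d | d + a ∈ U} :=
        sum_card_bipartiteAbove_eq_sum_card_bipartiteBelow (fun d a => d + a ∈ U)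
    _ = #A * #U := by rw [sum_congr rfl fun a _ => hcol a, sum_const, smul_eq_mul]

theorem exists_shift_card_mul_le {A U Z : Finset G} (hA : A.Nonempty) (hU : U.Nonempty)
    (hZ : ∀ d ∈ Z, ∀ a ∈ A, d + a ∉ U) :
    ∃ d ∉ Z, #A * #U ≤ (Fintype.card G - #Z) * #{a ∈ A | d + a ∈ U} := by
  have hsum : ∑ d ∈ Zᶜ, #{a ∈ A | d + a ∈ U} = #A * #U := by
    rw [← sum_card_filter_add_mem A U]
    refine sum_subset (subset_univ _) fun d _ hd => ?_
    rw [card_eq_zero, filter_eq_empty_iff]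
    exact hZ d (by simpa using hd)
  have hpos : 0 < #A * #U := Nat.mul_pos (card_pos.2 hA) (card_pos.2 hU)
  have hne : (Zᶜ).Nonempty := nonempty_of_sum_ne_zero (hsum.trans_ne hpos.ne')
  obtain ⟨d, hd, hle⟩ := exists_le_of_sum_le hne (f := fun _ => #A * #U)
    (g := fun d => #Zᶜ * #{a ∈ A | d + a ∈ U})
    (by rw [sum_const, ← mul_sum, hsum, smul_eq_mul])
  exact ⟨d, mem_compl.1 hd, by rwa [card_compl] at hle⟩

theorem GreedyWins.hasShiftMatching {z r c : ℕ} (h : GreedyWins (Fintype.card G) z r c) :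
    ∀ {A U Z : Finset G}, #A = r → #U = r → #Z = z → (∀ d ∈ Z, ∀ a ∈ A, d + a ∉ U) →
      HasShiftMatching A U c := by
  induction h with
  | of_le hrc =>
    intro A U Z hA hU _ _
    exact hasShiftMatching_of_card_le (hA.trans hU.symm).le (hA ▸ hrc)
  | @step z r c hr _ ih =>
    intro A U Z hA hU hZ hdead
    obtain ⟨d, hdZ, hd⟩ :=
      exists_shift_card_mul_le (card_pos.1 (hA ▸ hr)) (card_pos.1 (hU ▸ hr)) hdead
    set B := {a ∈ A | d + a ∈ U}
    have hsplit : #B + #{a ∈ A | d + a ∉ U} = r := hA ▸ card_filter_add_card_filter_not _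
    have hU' : #(U \ A.image (d + ·)) = r - #B := by
      have : A.image (d + ·) ∩ U = B.image (d + ·) := by ext; simp [B]
      rw [card_sdiff, this, card_image_of_injective _ (add_right_injective d), hU]
    refine .of_residual d (ih #B (by simpa only [hA, hU, hZ, ← sq, mul_comm] using hd)
      (by omega) (by omega) hU' (by rw [card_insert_of_notMem hdZ, hZ]) ?_)
    intro d' hd' a ha hmem
    obtain ⟨haA, hda⟩ := mem_filter.1 ha
    rcases mem_insert.1 hd' with rfl | hd'Z
    · exact hda (mem_sdiff.1 hmem).1
    · exact hdead d' hd'Z a haA (mem_sdiff.1 hmem).1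

end ShiftMatching

section TwoToOne

variable {G : Type*} [Fintype G] [DecidableEq G] {f : G → G}

theorem two_mul_card_image_of_two_to_one (h2 : ∀ b ∈ univ.image f, #(preim f b) = 2) :
    2 * #(univ.image f) = Fintype.card G := by
  rw [← card_univ, card_eq_sum_card_image f univ, mul_comm, ← smul_eq_mul, ← sum_const]
  exact (sum_congr rfl h2).symm

theorem eq_of_two_to_one (h2 : ∀ b ∈ univ.image f, #(preim f b) = 2) {x y z : G}
    (hxy : f x = f y) (hz : f z = f x) (hx : x ≠ z) (hy : y ≠ z) : x = y := by
  by_contra hne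
  have : 2 < #(preim f (f x)) := two_lt_card.2
    ⟨x, by simp [preim], y, by simp [preim, hxy], z, by simp [preim, hz], hne, hx, hy⟩
  rw [h2 _ (mem_image_of_mem f (mem_univ x))] at this
  exact lt_irrefl _ this

variable [AddGroup G]

theorem pres_le_imCard (g : G → G) (hg : Function.Bijective fun x => g x + f x) :
    pres f ≤ imCard g :=
  Nat.sInf_le ⟨g, hg, rfl⟩

theorem pres_le_succ_of_hasShiftMatching (h2 : ∀ b ∈ univ.image f, #(preim f b) = 2) {c : ℕ}
    (hm : HasShiftMatching (univ.image f) (univ.image f)ᶜ c) : pres f ≤ c + 1 := by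
  obtain ⟨d, hcard, hmaps, hinj⟩ := hm
  have hmem : ∀ x, f x ∈ univ.image f := fun x => mem_image_of_mem f (mem_univ x)
  have hout : ∀ x y, d (f x) + f x ≠ f y := fun x y h => by
    simpa [h] using hmaps (hmem x)
  have hσ : ∀ x, f (Function.invFun f (f x)) = f x := fun x => Function.invFun_eq ⟨x, rfl⟩
  set g : G → G := fun x => if x = Function.invFun f (f x) then 0 else d (f x)
  have hg : Function.Injective fun x => g x + f x := by
    intro x y hxy
    simp only [g] at hxy
    split_ifs at hxy with hx hy hy
    · rw [zero_add, zero_add] at hxy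
      rw [hx, hy, hxy]
    · exact absurd (hxy.symm.trans (zero_add _)) (hout y x)
    · exact absurd (hxy.trans (zero_add _)) (hout x y)
    · have hfxy : f x = f y := hinj (hmem x) (hmem y) hxy
      exact eq_of_two_to_one h2 hfxy (hσ x) hx (hfxy ▸ hy)
  calc pres f ≤ imCard g := pres_le_imCard g (Finite.injective_iff_bijective.1 hg)
    _ ≤ #(insert 0 ((univ.image f).image d)) := by
      refine card_le_card fun v hv => ?_
      obtain ⟨x, -, rfl⟩ := mem_image.1 hv
      simp only [g]
      split_ifs
      · exact mem_insert_self _ _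
      · exact mem_insert_of_mem (mem_image_of_mem d (hmem x))
    _ ≤ c + 1 := (card_insert_le _ _).trans (by omega)

end TwoToOne

theorem pres_le_of_square_two_to_one_general {G : Type*} [AddGroup G] [Fintype G] [DecidableEq G]
    (f : G → G) (s : ℕ) (hq : Fintype.card G = s ^ 2)
    (h2 : ∀ b ∈ Finset.univ.image f, (preim f b).card = 2) :
    pres f ≤ 2 * s - 2 := by
  set N := univ.image f
  have hN : 2 * #N = s ^ 2 := hq ▸ two_mul_card_image_of_two_to_one h2
  have hs : 2 ≤ s := by
    have : 0 < #N := card_pos.2 (univ_nonempty.image f)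
    by_contra! h
    interval_cases s <;> omega
  have hdead : ∀ d ∈ ({0} : Finset G), ∀ a ∈ N, d + a ∉ Nᶜ := by simp
  have hm : HasShiftMatching N Nᶜ (2 * s - 3) :=
    (hq ▸ greedyWins_start hs hN).hasShiftMatching rfl (by rw [card_compl]; omega)
      (card_singleton 0) hdead
  calc pres f ≤ 2 * s - 3 + 1 := pres_le_succ_of_hasShiftMatching h2 hm
    _ = 2 * s - 2 := by omega

/-- If `#G = q = s²` is a perfect square and `f : G → G` is two-to-one, then
`pres(f) ≤ 2√q − 2 = 2s − 2`. -/
theorem pres_le_of_square_two_to_one {G : Type*} [AddGroup G] [Fintype G] [DecidableEq G]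
    (f : G → G) (s : ℕ) (hs : 0 < s) (hq : Fintype.card G = s ^ 2)
    (h2 : ∀ b ∈ Finset.univ.image f, (preim f b).card = 2) :
    pres f ≤ 2 * s - 2 :=
  pres_le_of_square_two_to_one_general f s hq h2
end

section
/- Let G be a finite group of odd order q and let f : G → G satisfy f(0) = 0, preim(f,0) = {0}, and #preim(f,b) = 2 for every nonzero b ∈ Im(f). Define the integer sequence (n_k) by n_0 = (q−1)/2 and n_k = n_{k−1} − ⌈n_{k−1}²/(q−1)⌉ for k ≥ 1. Then for every integer k ≥ 1, pres(f) ≤ 1 + k + n_k. -/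
/-! The nonzero values `B` of `f` and the non-values `M` of `f` both have `m = (q - 1) / 2`
elements. Given a bijection `φ : B → M`, send one chosen preimage of each `b ∈ B` to `φ b` instead
of `b`: since `b` keeps its other preimage, this is a permutation `h`, and `g := h - f` takes only
the values `0` and `φ b - b`. So it suffices to match `B` with `M` using few differences.
Greedily: the `m²` differences `y - b` with `(b, y) ∈ B × M` are nonzero, so some `c ≠ 0` occurs
at least `⌈m² / (q - 1)⌉` times; match those `b` to `c + b` at the cost of one difference and
recurse on the rest, which after `k` rounds has `n_k` elements and is matched arbitrarily. -/

open Finset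

lemma Finset.exists_image_eq_of_card_eq {α : Type*} [DecidableEq α] {s t : Finset α}
    (h : #s = #t) : ∃ f : α → α, s.image f = t := by
  let e := s.equivOfCardEq h
  refine ⟨fun x => if hx : x ∈ s then e ⟨x, hx⟩ else x, ?_⟩
  ext y
  simp only [mem_image]
  constructor
  · rintro ⟨x, hx, rfl⟩
    simp [hx]
  · intro hy
    exact ⟨e.symm ⟨y, hy⟩, (e.symm ⟨y, hy⟩).2, by simp⟩

section GreedyMatching

variable {G : Type*} [AddGroup G] [DecidableEq G]

lemma exists_image_eq_card_image_sub_le_of_translate {B M S : Finset G} {c : G} (hSB : S ⊆ B)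
    (hSM : S.image (c + ·) ⊆ M) {ψ : G → G} (hψ : (B \ S).image ψ = M \ S.image (c + ·)) :
    ∃ φ : G → G, B.image φ = M ∧
      #(B.image fun b => φ b - b) ≤ #((B \ S).image fun b => ψ b - b) + 1 := by
  refine ⟨fun x => if x ∈ S then c + x else ψ x, ?_, ?_⟩
  · have hS : S.image (fun x => if x ∈ S then c + x else ψ x) = S.image (c + ·) :=
      image_congr fun x hx => if_pos hx
    have hBS : (B \ S).image (fun x => if x ∈ S then c + x else ψ x) = (B \ S).image ψ :=
      image_congr fun x hx => if_neg (mem_sdiff.mp hx).2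
    rw [← union_sdiff_of_subset hSB, image_union, hS, hBS, hψ, union_sdiff_of_subset hSM]
  · refine (card_le_card fun y hy => ?_).trans (card_insert_le c _)
    obtain ⟨x, hx, rfl⟩ := mem_image.mp hy
    by_cases hxS : x ∈ S
    · simp [hxS]
    · simp only [if_neg hxS]
      exact mem_insert_of_mem (mem_image_of_mem _ (mem_sdiff.mpr ⟨hx, hxS⟩))

variable [Fintype G]

lemma sum_card_filter_add_mem_s16 (B M : Finset G) :
    ∑ c, #{b ∈ B | c + b ∈ M} = #B * #M := by
  simp_rw [card_filter]
  rw [sum_comm, card_eq_sum_ones B, sum_mul, one_mul]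
  refine sum_congr rfl fun b _ => ?_
  rw [← card_filter]
  exact card_equiv (Equiv.addRight b) (by simp)

lemma exists_ceil_le_card_filter_add_mem {B M : Finset G} (hBM : Disjoint B M) :
    ∃ c, ⌈(#B * #M : ℚ) / ((Fintype.card G - 1 : ℕ) : ℚ)⌉₊ ≤ #{b ∈ B | c + b ∈ M} := by
  have hq : #(univ.erase (0 : G)) = Fintype.card G - 1 := by
    rw [card_erase_of_mem (mem_univ _), card_univ]
  rcases (univ.erase (0 : G)).eq_empty_or_nonempty with hG | hG
  · refine ⟨0, ?_⟩
    rw [← hq, hG]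
    simp
  have hsum : ∑ c ∈ univ.erase 0, (#{b ∈ B | c + b ∈ M} : ℚ) = #B * #M := by
    rw [sum_erase _ (by simpa using fun b hb => disjoint_left.mp hBM hb), ← Nat.cast_sum,
      sum_card_filter_add_mem_s16, Nat.cast_mul]
  have hq0 : ((Fintype.card G - 1 : ℕ) : ℚ) ≠ 0 := by
    rw [← hq]
    exact_mod_cast hG.card_pos.ne'
  obtain ⟨c, -, hc⟩ := exists_le_of_sum_le hG
    (f := fun _ => (#B * #M : ℚ) / ((Fintype.card G - 1 : ℕ) : ℚ))
    (g := fun c => (#{b ∈ B | c + b ∈ M} : ℚ))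
    (by rw [hsum, sum_const, nsmul_eq_mul, hq, mul_div_cancel₀ _ hq0])
  exact ⟨c, Nat.ceil_le.mpr hc⟩

def greedyStep (q m : ℕ) : ℕ := m - ⌈(m : ℚ) ^ 2 / ((q - 1 : ℕ) : ℚ)⌉₊

theorem exists_image_eq_card_image_sub_le (k : ℕ) {B M : Finset G} (hBM : Disjoint B M)
    (hcard : #B = #M) :
    ∃ φ : G → G, B.image φ = M ∧
      #(B.image fun b => φ b - b) ≤ k + (greedyStep (Fintype.card G))^[k] #B := by
  induction k generalizing B M with
  | zero =>
    obtain ⟨φ, hφ⟩ := exists_image_eq_of_card_eq hcard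
    exact ⟨φ, hφ, by simpa using card_image_le⟩
  | succ k ih =>
    obtain ⟨c, hc⟩ := exists_ceil_le_card_filter_add_mem hBM
    rw [← hcard, ← sq] at hc
    obtain ⟨S, hS, hScard⟩ := exists_subset_card_eq hc
    have hSB : S ⊆ B := hS.trans (filter_subset _ _)
    have hSM : S.image (c + ·) ⊆ M :=
      image_subset_iff.mpr fun b hb => (mem_filter.mp (hS hb)).2
    have hstep : #(B \ S) = greedyStep (Fintype.card G) #B := by
      rw [card_sdiff_of_subset hSB, hScard, greedyStep]
    have hcard' : #(B \ S) = #(M \ S.image (c + ·)) := by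
      rw [card_sdiff_of_subset hSB, card_sdiff_of_subset hSM,
        card_image_of_injective _ (add_right_injective c), hcard]
    obtain ⟨ψ, hψ, hψcard⟩ := ih (hBM.mono sdiff_subset sdiff_subset) hcard'
    obtain ⟨φ, hφ, hφcard⟩ := exists_image_eq_card_image_sub_le_of_translate hSB hSM hψ
    refine ⟨φ, hφ, ?_⟩
    rw [Function.iterate_succ_apply, ← hstep]
    omega

end GreedyMatching

section Redirect

variable {G : Type*} [AddGroup G] [Fintype G] [DecidableEq G]

lemma pres_le_imCard_sub {f h : G → G} (hh : Function.Bijective h) :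
    pres f ≤ imCard (fun x => h x - f x) :=
  Nat.sInf_le ⟨_, by simpa using hh, rfl⟩

noncomputable def redirect (f : G → G) (B : Finset G) (φ : G → G) (x : G) : G :=
  if f x ∈ B ∧ x = Function.invFun f (f x) then φ (f x) else f x

lemma redirect_surjective {f φ : G → G} {B : Finset G} (hB : ∀ b ∈ B, 1 < #(preim f b))
    (hφ : B.image φ = (univ.image f)ᶜ) : Function.Surjective (redirect f B φ) := by
  have hsection : ∀ b ∈ B, f (Function.invFun f b) = b := fun b hb => by
    obtain ⟨x, hx⟩ := card_pos.mp (zero_lt_one.trans (hB b hb))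
    exact Function.invFun_eq ⟨x, (mem_filter.mp hx).2⟩
  intro y
  by_cases hy : y ∈ univ.image f
  · by_cases hyB : y ∈ B
    · obtain ⟨x, hx, hxne⟩ := exists_mem_ne (hB y hyB) (Function.invFun f y)
      have hfx : f x = y := (mem_filter.mp hx).2
      refine ⟨x, ?_⟩
      simp [redirect, hfx, hxne]
    · obtain ⟨x, -, rfl⟩ := mem_image.mp hy
      exact ⟨x, by simp [redirect, hyB]⟩
  · rw [← mem_compl, ← hφ] at hy
    obtain ⟨b, hb, rfl⟩ := mem_image.mp hy
    exact ⟨Function.invFun f b, by simp [redirect, hsection b hb, hb]⟩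

lemma imCard_redirect_sub_le (f φ : G → G) (B : Finset G) :
    imCard (fun x => redirect f B φ x - f x) ≤ 1 + #(B.image fun b => φ b - b) := by
  refine (card_le_card fun y hy => ?_).trans ((card_insert_le 0 _).trans_eq (add_comm _ _))
  obtain ⟨x, -, rfl⟩ := mem_image.mp hy
  unfold redirect
  split_ifs with hx
  · exact mem_insert_of_mem (mem_image.mpr ⟨f x, hx.1, rfl⟩)
  · simp

lemma pres_le_one_add_card_image_sub {f φ : G → G} {B : Finset G}
    (hB : ∀ b ∈ B, 1 < #(preim f b)) (hφ : B.image φ = (univ.image f)ᶜ) :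
    pres f ≤ 1 + #(B.image fun b => φ b - b) :=
  (pres_le_imCard_sub (Finite.surjective_iff_bijective.mp (redirect_surjective hB hφ))).trans
    (imCard_redirect_sub_le f φ B)

end Redirect

lemma mem_image_univ_of_preim_eq_singleton {G : Type*} [Fintype G] [DecidableEq G]
    {f : G → G} {a b : G} (h : preim f b = {a}) : b ∈ univ.image f := by
  have ha : a ∈ preim f b := h ▸ mem_singleton_self a
  exact mem_image.mpr ⟨a, mem_univ a, (mem_filter.mp ha).2⟩

section Counting

variable {G : Type*} [AddGroup G] [Fintype G] [DecidableEq G] {f : G → G}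

lemma card_eq_one_add_two_mul_card_image_erase_zero (hp0 : preim f 0 = {0})
    (h2 : ∀ b ∈ univ.image f, b ≠ 0 → #(preim f b) = 2) :
    Fintype.card G = 1 + 2 * #((univ.image f).erase 0) := by
  rw [← card_univ, card_eq_sum_card_image f,
    ← add_sum_erase _ _ (mem_image_univ_of_preim_eq_singleton hp0)]
  change #(preim f 0) + ∑ b ∈ (univ.image f).erase 0, #(preim f b) = _
  rw [hp0, card_singleton,
    sum_congr rfl fun b hb => h2 b (mem_of_mem_erase hb) (ne_of_mem_erase hb),
    sum_const, smul_eq_mul, mul_comm]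

lemma card_compl_image_eq_card_image_erase_zero (hp0 : preim f 0 = {0})
    (h2 : ∀ b ∈ univ.image f, b ≠ 0 → #(preim f b) = 2) :
    #(univ.image f)ᶜ = #((univ.image f).erase 0) := by
  have hq := card_eq_one_add_two_mul_card_image_erase_zero hp0 h2
  rw [card_compl, ← card_erase_add_one (mem_image_univ_of_preim_eq_singleton hp0)]
  omega

end Counting

theorem pres_le_seq_of_odd_two_to_one_general {G : Type*} [AddGroup G] [Fintype G]
    [DecidableEq G] (f : G → G)
    (hp0 : preim f 0 = {0})
    (h2 : ∀ b ∈ Finset.univ.image f, b ≠ 0 → (preim f b).card = 2)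
    (n : ℕ → ℕ) (h0 : n 0 = (Fintype.card G - 1) / 2)
    (hrec : ∀ k : ℕ,
      n (k + 1) = n k - ⌈((n k : ℚ) ^ 2) / ((Fintype.card G - 1 : ℕ) : ℚ)⌉₊) :
    ∀ k : ℕ, 1 ≤ k → pres f ≤ 1 + k + n k := by
  intro k _
  have hq := card_eq_one_add_two_mul_card_image_erase_zero hp0 h2
  have hn : ∀ j, n j = (greedyStep (Fintype.card G))^[j] #((univ.image f).erase 0) := by
    intro j
    induction j with
    | zero => rw [h0, hq, Function.iterate_zero_apply]; omega
    | succ j ih => rw [hrec, ih, Function.iterate_succ_apply', greedyStep]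
  obtain ⟨φ, hφ, hφcard⟩ := exists_image_eq_card_image_sub_le k
    (disjoint_compl_right.mono_left (erase_subset _ _))
    (card_compl_image_eq_card_image_erase_zero hp0 h2).symm
  have hpres := pres_le_one_add_card_image_sub
    (fun b hb => by rw [h2 b (mem_of_mem_erase hb) (ne_of_mem_erase hb)]; norm_num) hφ
  rw [hn k]
  omega

/-- If `#G = q` is odd, `f(0) = 0`, `preim(f,0) = {0}`, `f` is two-to-one on the nonzero
elements, and `n₀ = (q−1)/2`, `n_k = n_{k−1} − ⌈n_{k−1}²/(q−1)⌉`, then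
`pres(f) ≤ 1 + k + n_k` for every `k ≥ 1`. -/
theorem pres_le_seq_of_odd_two_to_one {G : Type*} [AddGroup G] [Fintype G]
    [DecidableEq G] (f : G → G) (ho : Odd (Fintype.card G))
    (hf0 : f 0 = 0) (hp0 : preim f 0 = {0})
    (h2 : ∀ b ∈ Finset.univ.image f, b ≠ 0 → (preim f b).card = 2)
    (n : ℕ → ℕ) (h0 : n 0 = (Fintype.card G - 1) / 2)
    (hrec : ∀ k : ℕ,
      n (k + 1) = n k - ⌈((n k : ℚ) ^ 2) / ((Fintype.card G - 1 : ℕ) : ℚ)⌉₊) :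
    ∀ k : ℕ, 1 ≤ k → pres f ≤ 1 + k + n k :=
  pres_le_seq_of_odd_two_to_one_general f hp0 h2 n h0 hrec
end
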